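/- (Monotonicity of the ruin probability in α.) Let F be the distribution function of a probability measure on [0,∞) with F(0)=0, finite mean, and F(z) < 1 for all z ≥ 0. Define g(x) = ∫ₓ^∞ (1 − F(z)) dz, so that the integrated ruin equation V = α(g + Ψ_F V) with α = λ/c corresponds to the Lundberg ruin probability. Then for every fixed x ≥ 0, the map α ↦ u_{α,g}(x) is strictly increasing on (0,∞). -/

import Mathlib

open MeasureTheory Set Filter

/-- The compounding operator `Ψ_F` associated with the probability measure `μ` on `[0,∞)`
(whose distribution function is `F`, so that `F(0) = 0` reads `μ (Iic 0) = 0`):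
`(Ψ_F h)(x) = ∫₀ˣ (h(z) - ∫₀ᶻ h(z-y) dF(y)) dz`,
the inner integral being the Lebesgue–Stieltjes integral with respect to `F`. -/
noncomputable def Psi (μ : Measure ℝ) (h : ℝ → ℝ) : ℝ → ℝ :=
  fun x => ∫ z in (0:ℝ)..x, (h z - ∫ y in Icc (0:ℝ) z, h (z - y) ∂μ)

/-- `h : [0,∞) → ℝ` is locally bounded. -/
def LocBdd (h : ℝ → ℝ) : Prop :=
  ∀ x : ℝ, ∃ M : ℝ, ∀ z ∈ Icc (0:ℝ) x, |h z| ≤ M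

/-- `‖h‖_{[0,x]} = sup_{z ∈ [0,x]} |h z|`. -/
noncomputable def supNorm (h : ℝ → ℝ) (x : ℝ) : ℝ :=
  sSup ((fun z => |h z|) '' Icc (0:ℝ) x)

open Topology

/-!
For `0 < a < b` the difference `w = u_b - u_a` satisfies, by linearity of `Ψ_F`,
`w = a Ψ_F w + ((b - a) / b) u_b`: an equation of the same shape as `u_b = b Ψ_F u_b + b g`.
Both `u_b` and `w` are therefore positive by one first-crossing argument: if `v = a Ψ_F v + φ`
with `a ≥ 0`, `φ > 0` and `v` continuous, let `c` be the first point where `v ≤ 0`. By Fubini,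
`Ψ_F v (c) = V(c) - ∫_{[0,c]} V(c - y) dF(y)` with `V` the primitive of `v`, and `V` is
nondecreasing on `[0,c]`, so `Ψ_F v (c) ≥ (1 - F(c)) V(c) ≥ 0` and `v(c) ≥ φ(c) > 0`.
Continuity of the solutions comes from that of the tail integral `g` and of `Ψ_F v`.
-/

namespace LocBdd

variable {f h : ℝ → ℝ}

lemma exists_nonneg_bound (hh : LocBdd h) (T : ℝ) :
    ∃ M, 0 ≤ M ∧ ∀ z ∈ Icc 0 T, |h z| ≤ M := by
  obtain ⟨M, hM⟩ := hh T
  exact ⟨max M 0, le_max_right _ _, fun z hz => (hM z hz).trans (le_max_left _ _)⟩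

lemma sub (hf : LocBdd f) (hh : LocBdd h) : LocBdd (fun z => f z - h z) := fun x => by
  obtain ⟨Mf, hMf⟩ := hf x
  obtain ⟨Mh, hMh⟩ := hh x
  exact ⟨Mf + Mh, fun z hz => (abs_sub _ _).trans (add_le_add (hMf z hz) (hMh z hz))⟩

lemma integrableOn_Icc (hh : LocBdd h) (hm : Measurable h) (T : ℝ) :
    IntegrableOn h (Icc 0 T) := by
  obtain ⟨M, hM⟩ := hh T
  refine Integrable.mono' (g := fun _ => M) (integrableOn_const measure_Icc_lt_top.ne)
    hm.aestronglyMeasurable ?_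
  filter_upwards [ae_restrict_mem measurableSet_Icc] with z hz using hM z hz

lemma intervalIntegrable (hh : LocBdd h) (hm : Measurable h) {c d : ℝ} (hc : 0 ≤ c)
    (hd : 0 ≤ d) : IntervalIntegrable h volume c d :=
  ((hh.integrableOn_Icc hm (max c d)).mono_set
    (uIcc_subset_Icc ⟨hc, le_max_left c d⟩ ⟨hd, le_max_right c d⟩)).intervalIntegrable

lemma continuousOn_primitive (hh : LocBdd h) (hm : Measurable h) :
    ContinuousOn (fun x => ∫ s in 0..x, h s) (Ici 0) := by
  intro t (ht : 0 ≤ t)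
  have hle : (0 : ℝ) ≤ t + 1 := by linarith
  have hcont := intervalIntegral.continuousOn_primitive_interval'
    (hh.intervalIntegrable hm le_rfl hle) left_mem_uIcc
  rw [uIcc_of_le hle] at hcont
  have hnhds : Icc 0 (t + 1) ∈ 𝓝[Ici 0] t := by
    rw [← Ici_inter_Iic]
    exact inter_mem_nhdsWithin _ (Iic_mem_nhds (lt_add_one t))
  exact (hcont t ⟨ht, by linarith⟩).mono_of_mem_nhdsWithin hnhds

end LocBdd

section Psi

variable {μ : Measure ℝ} {f h w : ℝ → ℝ}

noncomputable def shiftKernel (h : ℝ → ℝ) (p : ℝ × ℝ) : ℝ :=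
  {p : ℝ × ℝ | 0 ≤ p.2 ∧ p.2 ≤ p.1}.indicator (fun p => h (p.1 - p.2)) p

lemma measurable_shiftKernel (hm : Measurable h) : Measurable (shiftKernel h) :=
  (hm.comp (measurable_fst.sub measurable_snd)).indicator
    ((measurableSet_le measurable_const measurable_snd).inter
      (measurableSet_le measurable_snd measurable_fst))

lemma shiftKernel_apply (z y : ℝ) :
    shiftKernel h (z, y) = (Icc 0 z).indicator (fun y => h (z - y)) y := by
  simp [shiftKernel, indicator_apply]

lemma abs_shiftKernel_le {T M : ℝ} (hM0 : 0 ≤ M) (hM : ∀ s ∈ Icc 0 T, |h s| ≤ M) {z : ℝ}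
    (hz : z ≤ T) (y : ℝ) : |shiftKernel h (z, y)| ≤ M := by
  rw [shiftKernel_apply]
  by_cases hy : y ∈ Icc 0 z
  · rw [indicator_of_mem hy]
    exact hM _ ⟨sub_nonneg.2 hy.2, by linarith [hy.1]⟩
  · rwa [indicator_of_notMem hy, abs_zero]

lemma integral_shiftKernel (z : ℝ) :
    ∫ y, shiftKernel h (z, y) ∂μ = ∫ y in Icc 0 z, h (z - y) ∂μ := by
  simp_rw [shiftKernel_apply, integral_indicator measurableSet_Icc]

lemma measurable_integral_shift [SFinite μ] (hm : Measurable h) :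
    Measurable (fun z => ∫ y in Icc 0 z, h (z - y) ∂μ) := by
  simp_rw [← integral_shiftKernel]
  exact (measurable_shiftKernel hm).stronglyMeasurable.integral_prod_right'.measurable

lemma LocBdd.integral_shift [IsFiniteMeasure μ] (hh : LocBdd h) :
    LocBdd (fun z => ∫ y in Icc 0 z, h (z - y) ∂μ) := fun x => by
  obtain ⟨M, hM0, hM⟩ := hh.exists_nonneg_bound x
  refine ⟨M * μ.real univ, fun z hz => ?_⟩
  have := norm_integral_le_of_norm_le_const (μ := μ) (f := fun y => shiftKernel h (z, y))
    (ae_of_all _ fun y => abs_shiftKernel_le hM0 hM hz.2 y)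
  rwa [integral_shiftKernel, Real.norm_eq_abs] at this

lemma continuousOn_Psi [IsFiniteMeasure μ] (hh : LocBdd h) (hm : Measurable h) :
    ContinuousOn (Psi μ h) (Ici 0) :=
  (hh.sub hh.integral_shift).continuousOn_primitive (hm.sub (measurable_integral_shift hm))

lemma setIntegral_Icc_shiftKernel (t y : ℝ) :
    ∫ z in Icc 0 t, shiftKernel h (z, y) =
      (Icc 0 t).indicator (fun y => ∫ s in 0..(t - y), h s) y := by
  by_cases hy : y ∈ Icc 0 t
  · have hK : ∀ z, shiftKernel h (z, y) = (Ici y).indicator (fun z => h (z - y)) z := by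
      intro z
      simp [shiftKernel, indicator_apply, hy.1]
    have hIcc : Icc 0 t ∩ Ici y = Icc y t := by
      ext z
      simp only [mem_inter_iff, mem_Icc, mem_Ici]
      constructor
      · exact fun hz => ⟨hz.2, hz.1.2⟩
      · exact fun hz => ⟨⟨hy.1.trans hz.1, hz.2⟩, hz.1⟩
    simp_rw [indicator_of_mem hy, hK]
    rw [setIntegral_indicator measurableSet_Ici, hIcc, integral_Icc_eq_integral_Ioc,
      ← intervalIntegral.integral_of_le hy.2, intervalIntegral.integral_comp_sub_right, sub_self]
  · rw [indicator_of_notMem hy]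
    refine setIntegral_eq_zero_of_forall_eq_zero fun z hz => ?_
    rw [shiftKernel_apply, indicator_of_notMem fun hyz => hy ⟨hyz.1, hyz.2.trans hz.2⟩]

lemma integral_integral_shift [IsFiniteMeasure μ] (hh : LocBdd h) (hm : Measurable h) {t : ℝ}
    (ht : 0 ≤ t) :
    ∫ z in 0..t, ∫ y in Icc 0 z, h (z - y) ∂μ = ∫ y in Icc 0 t, (∫ s in 0..(t - y), h s) ∂μ := by
  obtain ⟨M, hM0, hM⟩ := hh.exists_nonneg_bound t
  have : IsFiniteMeasure (volume.restrict (Icc (0 : ℝ) t)) :=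
    isFiniteMeasure_restrict.2 measure_Icc_lt_top.ne
  have hint : Integrable (shiftKernel h) ((volume.restrict (Icc 0 t)).prod μ) := by
    refine Integrable.of_bound (measurable_shiftKernel hm).aestronglyMeasurable M ?_
    rw [Measure.restrict_prod_eq_prod_univ]
    filter_upwards [ae_restrict_mem (measurableSet_Icc.prod MeasurableSet.univ)] with p hp
    exact abs_shiftKernel_le hM0 hM hp.1.2 p.2
  calc ∫ z in 0..t, ∫ y in Icc 0 z, h (z - y) ∂μ
      = ∫ z in Icc 0 t, ∫ y, shiftKernel h (z, y) ∂μ := by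
        simp_rw [intervalIntegral.integral_of_le ht, ← integral_Icc_eq_integral_Ioc,
          integral_shiftKernel]
    _ = ∫ y, (∫ z in Icc 0 t, shiftKernel h (z, y)) ∂μ :=
        integral_integral_swap (f := fun z y => shiftKernel h (z, y)) hint
    _ = ∫ y in Icc 0 t, (∫ s in 0..(t - y), h s) ∂μ := by
        simp_rw [setIntegral_Icc_shiftKernel, integral_indicator measurableSet_Icc]

theorem Psi_eq_primitive_sub [IsFiniteMeasure μ] (hh : LocBdd h) (hm : Measurable h) {t : ℝ}
    (ht : 0 ≤ t) :
    Psi μ h t = (∫ s in 0..t, h s) - ∫ y in Icc 0 t, (∫ s in 0..(t - y), h s) ∂μ := by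
  rw [Psi, intervalIntegral.integral_sub (hh.intervalIntegrable hm le_rfl ht)
    (hh.integral_shift.intervalIntegrable (measurable_integral_shift hm) le_rfl ht),
    integral_integral_shift hh hm ht]

lemma integrableOn_primitive_sub [IsFiniteMeasure μ] (hh : LocBdd h) (hm : Measurable h)
    (t : ℝ) : IntegrableOn (fun y => ∫ s in 0..(t - y), h s) (Icc 0 t) μ :=
  ((hh.continuousOn_primitive hm).comp (by fun_prop) fun y hy => sub_nonneg.2 hy.2 :
    ContinuousOn (fun y => ∫ s in 0..(t - y), h s) (Icc 0 t)).integrableOn_compact isCompact_Icc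

theorem Psi_sub [IsFiniteMeasure μ] (hf : LocBdd f) (hfm : Measurable f) (hh : LocBdd h)
    (hhm : Measurable h) {t : ℝ} (ht : 0 ≤ t) :
    Psi μ (fun z => f z - h z) t = Psi μ f t - Psi μ h t := by
  have hprim : ∀ s, 0 ≤ s → ∫ r in 0..s, (f r - h r) = (∫ r in 0..s, f r) - ∫ r in 0..s, h r :=
    fun s hs => intervalIntegral.integral_sub (hf.intervalIntegrable hfm le_rfl hs)
      (hh.intervalIntegrable hhm le_rfl hs)
  have hshift : ∫ y in Icc 0 t, (∫ s in 0..(t - y), (f s - h s)) ∂μ =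
      ∫ y in Icc 0 t, ((∫ s in 0..(t - y), f s) - ∫ s in 0..(t - y), h s) ∂μ :=
    setIntegral_congr_fun measurableSet_Icc fun y hy => hprim (t - y) (sub_nonneg.2 hy.2)
  rw [Psi_eq_primitive_sub (hf.sub hh) (hfm.sub hhm) ht, Psi_eq_primitive_sub hf hfm ht,
    Psi_eq_primitive_sub hh hhm ht, hprim t ht, hshift,
    integral_sub (integrableOn_primitive_sub hf hfm t) (integrableOn_primitive_sub hh hhm t)]
  ring

theorem Psi_nonneg [IsProbabilityMeasure μ] (hw : LocBdd w) (hm : Measurable w) {c : ℝ}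
    (hc : 0 ≤ c) (hpos : ∀ s ∈ Ico 0 c, 0 ≤ w s) : 0 ≤ Psi μ w c := by
  set W : ℝ → ℝ := fun s => ∫ r in 0..s, w r
  have hmono : MonotoneOn W (Icc 0 c) := by
    intro r hr q hq hrq
    have hrq_nonneg : 0 ≤ ∫ s in r..q, w s := by
      refine intervalIntegral.integral_nonneg_of_ae_restrict hrq ?_
      rw [Measure.restrict_congr_set Ico_ae_eq_Icc.symm]
      filter_upwards [ae_restrict_mem measurableSet_Ico] with s hs
        using hpos s ⟨hr.1.trans hs.1, hs.2.trans_le hq.2⟩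
    have := intervalIntegral.integral_add_adjacent_intervals
      (hw.intervalIntegrable hm le_rfl hr.1) (hw.intervalIntegrable hm hr.1 hq.1)
    linarith
  have hW : 0 ≤ W c := by
    simpa [W] using hmono ⟨le_rfl, hc⟩ ⟨hc, le_rfl⟩ hc
  have hμ : μ.real (Icc 0 c) ≤ 1 := measureReal_le_one
  calc 0 ≤ W c - μ.real (Icc 0 c) * W c := by nlinarith
    _ = W c - ∫ _ in Icc 0 c, W c ∂μ := by rw [setIntegral_const, smul_eq_mul]
    _ ≤ W c - ∫ y in Icc 0 c, W (c - y) ∂μ :=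
        sub_le_sub_left (setIntegral_mono_on (integrableOn_primitive_sub hw hm c)
          (integrableOn_const (measure_ne_top μ _)) measurableSet_Icc fun y hy =>
            hmono ⟨sub_nonneg.2 hy.2, by linarith [hy.1]⟩ ⟨hc, le_rfl⟩ (by linarith [hy.1])) _
    _ = Psi μ w c := (Psi_eq_primitive_sub hw hm hc).symm

theorem pos_of_eq_mul_Psi_add [IsProbabilityMeasure μ] {φ : ℝ → ℝ} (hw : LocBdd w)
    (hm : Measurable w) (hwc : ContinuousOn w (Ici 0)) {a : ℝ} (ha : 0 ≤ a)
    (hφ : ∀ t ≥ 0, 0 < φ t) (heq : ∀ t ≥ 0, w t = a * Psi μ w t + φ t) :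
    ∀ t ≥ 0, 0 < w t := by
  by_contra! ⟨t, ht, hwt⟩
  set S := Ici 0 ∩ w ⁻¹' Iic 0
  have hSb : BddBelow S := ⟨0, fun s hs => hs.1⟩
  obtain ⟨hc, hwc⟩ : sInf S ∈ S :=
    (hwc.preimage_isClosed_of_isClosed isClosed_Ici isClosed_Iic).csInf_mem ⟨t, ht, hwt⟩ hSb
  have hbefore : ∀ s ∈ Ico 0 (sInf S), 0 ≤ w s := fun s hs =>
    le_of_not_ge fun hle => (csInf_le hSb ⟨hs.1, hle⟩).not_gt hs.2
  have hPsi := Psi_nonneg (μ := μ) hw hm hc hbefore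
  have hwc' : w (sInf S) ≤ 0 := hwc
  nlinarith [heq _ hc, hφ _ hc]

end Psi

theorem setIntegral_pos_of_forall_pos {X : Type*} [MeasurableSpace X] {μ : Measure X}
    {s : Set X} {f : X → ℝ} (hs : MeasurableSet s) (hμs : μ s ≠ 0) (hf : IntegrableOn f s μ)
    (hpos : ∀ x ∈ s, 0 < f x) : 0 < ∫ x in s, f x ∂μ := by
  rw [setIntegral_pos_iff_support_of_nonneg_ae
    ((ae_restrict_iff' hs).2 (ae_of_all _ fun x hx => (hpos x hx).le)) hf,
    inter_eq_right.2 fun x hx => Function.mem_support.2 (hpos x hx).ne']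
  exact pos_iff_ne_zero.2 hμs

theorem ruin_strictMono_in_alpha_general (μ : Measure ℝ) [IsProbabilityMeasure μ]
    (hFlt : ∀ z ≥ (0:ℝ), (μ (Iic z)).toReal < 1)
    (hmean : IntegrableOn (fun z => 1 - (μ (Iic z)).toReal) (Ioi 0))
    (u : ℝ → ℝ → ℝ)
    (hu : ∀ a : ℝ, Measurable (u a) ∧ LocBdd (u a) ∧
      ∀ x ≥ (0:ℝ), u a x =
        a * ((∫ z in Ioi x, (1 - (μ (Iic z)).toReal)) + Psi μ (u a) x)) :
    ∀ x ≥ (0:ℝ), StrictMonoOn (fun a => u a x) (Ioi 0) := by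
  have hg_pos : ∀ x ≥ (0:ℝ), 0 < ∫ z in Ioi x, (1 - (μ (Iic z)).toReal) := fun x hx =>
    setIntegral_pos_of_forall_pos measurableSet_Ioi (by simp)
      (hmean.mono_set (Ioi_subset_Ioi hx)) fun z hz => sub_pos.2 (hFlt z (hx.trans hz.le))
  have hu_cont : ∀ a, ContinuousOn (u a) (Ici 0) := fun a =>
    (continuousOn_const.mul (hmean.continuousOn_Ici_primitive_Ioi.add
      (continuousOn_Psi (μ := μ) (hu a).2.1 (hu a).1))).congr fun x hx => (hu a).2.2 x hx
  intro x hx a (ha : 0 < a) b (hb : 0 < b) (hab : a < b)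
  show u a x < u b x
  obtain ⟨hub_meas, hub_bdd, hub_eq⟩ := hu b
  obtain ⟨hua_meas, hua_bdd, hua_eq⟩ := hu a
  have hub_pos : ∀ t ≥ 0, 0 < u b t :=
    pos_of_eq_mul_Psi_add (μ := μ) hub_bdd hub_meas (hu_cont b) hb.le
      (fun t ht => mul_pos hb (hg_pos t ht)) fun t ht => by rw [hub_eq t ht]; ring
  have hdiff_pos : ∀ t ≥ 0, 0 < u b t - u a t :=
    pos_of_eq_mul_Psi_add (μ := μ) (hub_bdd.sub hua_bdd) (hub_meas.sub hua_meas)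
      ((hu_cont b).sub (hu_cont a)) ha.le
      (fun t ht => mul_pos (div_pos (sub_pos.2 hab) hb) (hub_pos t ht)) fun t ht => by
        rw [Psi_sub hub_bdd hub_meas hua_bdd hua_meas ht, hub_eq t ht, hua_eq t ht]
        field_simp
        ring
  exact sub_pos.1 (hdiff_pos x hx)

/-- monotonicity of the ruin probability in `α`: with
`g(x) = ∫ₓ^∞ (1 − F(z)) dz` (finite mean, `F(z) < 1` for all `z ≥ 0`), for every fixed
`x ≥ 0` the map `α ↦ u_{α,g}(x)` is strictly increasing on `(0,∞)`, where `u_{α,g}` is the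
(unique) measurable locally bounded solution of the integrated ruin equation
`u = α(g + Ψ_F u)`. -/
theorem ruin_strictMono_in_alpha (μ : Measure ℝ) [IsProbabilityMeasure μ]
    (hμ0 : μ (Iic 0) = 0)
    (hFlt : ∀ z ≥ (0:ℝ), (μ (Iic z)).toReal < 1)
    (hmean : IntegrableOn (fun z => 1 - (μ (Iic z)).toReal) (Ioi 0))
    (u : ℝ → ℝ → ℝ)
    (hu : ∀ a : ℝ, Measurable (u a) ∧ LocBdd (u a) ∧
      ∀ x ≥ (0:ℝ), u a x =
        a * ((∫ z in Ioi x, (1 - (μ (Iic z)).toReal)) + Psi μ (u a) x)) :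
    ∀ x ≥ (0:ℝ), StrictMonoOn (fun a => u a x) (Ioi 0) :=
  ruin_strictMono_in_alpha_general μ hFlt hmean u hu
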